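/- Let a, b in R<x> be homogeneous analytic polynomials (containing no starred variables) with deg(a) = deg(b) > 0. Then a + b* is irreducible in R<x,x*>. -/

import Mathlib

open scoped BigOperators

noncomputable section

/-- The free real *-algebra on `g` variables `x₁,…,x_g` and their formal adjoints
`x₁*,…,x_g*`, modeled as the monoid algebra of the free monoid on `2g` letters,
where `Sum.inl i` is `xᵢ` and `Sum.inr i` is `xᵢ*`. -/
abbrev FreeStarAlg (g : ℕ) := MonoidAlgebra ℝ (FreeMonoid (Fin g ⊕ Fin g))

namespace FreeStarAlg

variable {g : ℕ}

/-- The involution on words: reverse the word and star each letter. -/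
def starWord (w : FreeMonoid (Fin g ⊕ Fin g)) : FreeMonoid (Fin g ⊕ Fin g) :=
  FreeMonoid.ofList (((FreeMonoid.toList w).map Sum.swap).reverse)

/-- The involution `p ↦ p*` on the free *-algebra. -/
def starP (p : FreeStarAlg g) : FreeStarAlg g :=
  MonoidAlgebra.mapDomain starWord p

/-- The monomial corresponding to a word. -/
def mono (w : FreeMonoid (Fin g ⊕ Fin g)) : FreeStarAlg g :=
  MonoidAlgebra.single w 1

/-- Degree of a noncommutative polynomial. -/
def deg (p : FreeStarAlg g) : ℕ :=
  p.coeff.support.sup fun w => (FreeMonoid.toList w).length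

/-- `p` is homogeneous of degree `d`: every word appearing in `p` has length `d`. -/
def IsHom (d : ℕ) (p : FreeStarAlg g) : Prop :=
  ∀ w ∈ p.coeff.support, (FreeMonoid.toList w).length = d

/-- `p` is a (finite) sum of hermitian squares `qᵢ* qᵢ`. -/
def IsSOS (p : FreeStarAlg g) : Prop :=
  ∃ (k : ℕ) (q : Fin k → FreeStarAlg g), p = ∑ i, starP (q i) * q i

/-- Membership in `I + I*`. -/
def MemIplusIstar (I : Submodule (FreeStarAlg g) (FreeStarAlg g)) (p : FreeStarAlg g) : Prop :=
  ∃ u ∈ I, ∃ v ∈ I, p = u + starP v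

/-- A left ideal `I` is real if `∑ aᵢ* aᵢ ∈ I + I*` forces every `aᵢ ∈ I`. -/
def IsRealIdeal (I : Submodule (FreeStarAlg g) (FreeStarAlg g)) : Prop :=
  ∀ (r : ℕ) (a : Fin r → FreeStarAlg g),
    MemIplusIstar I (∑ i, starP (a i) * a i) → ∀ i, a i ∈ I

/-- The left ideal generated by a set `S`. -/
def leftIdealGen (S : Set (FreeStarAlg g)) : Submodule (FreeStarAlg g) (FreeStarAlg g) :=
  Submodule.span (FreeStarAlg g) S

/-- `p` is irreducible: it cannot be written as a product of two polynomials of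
strictly smaller degree. -/
def Irred (p : FreeStarAlg g) : Prop :=
  ¬ ∃ q r : FreeStarAlg g, p = q * r ∧ deg q < deg p ∧ deg r < deg p

/-- `p` is analytic: it contains no starred variables. -/
def IsAnalytic (p : FreeStarAlg g) : Prop :=
  ∀ w ∈ p.coeff.support, ∀ l ∈ FreeMonoid.toList w, l.isLeft

end FreeStarAlg

open FreeStarAlg

/-!
If `q r` has degree `deg q + deg r`, its coefficient at a word `s t` with `|s| = deg q`,
`|t| = deg r` is `q_s r_t`. Hence the top-degree support of `q r` is a "rectangle": whenever
`u₁ u₂` and `v₁ v₂` lie in it (split at length `deg q`), so does `u₁ v₂`. In `a + b*` every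
word is either unstarred (from `a`) or fully starred (from `b*`); splitting a word of `a` and a
word of `b*` with both factor degrees positive produces a mixed word `u₁ v₂` in the support,
which is impossible.
-/

namespace FreeMonoid

variable {α : Type*}

theorem eq_and_eq_of_mul_eq_mul_of_length_le {s t s' t' : FreeMonoid α} (h : s' * t' = s * t)
    (hs : s'.length ≤ s.length) (ht : t'.length ≤ t.length) : s' = s ∧ t' = t := by
  have hlen : s'.length = s.length := by
    have := congrArg length h
    rw [length_mul, length_mul] at this
    omega
  exact List.append_inj h hlen

theorem exists_mul_eq_of_length_eq_add {w : FreeMonoid α} {m n : ℕ} (h : w.length = m + n) :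
    ∃ s t : FreeMonoid α, w = s * t ∧ s.length = m ∧ t.length = n := by
  have h : w.toList.length = m + n := h
  refine ⟨ofList (w.toList.take m), ofList (w.toList.drop m), (List.take_append_drop m _).symm,
    ?_, ?_⟩ <;> simp only [length, toList_ofList, List.length_take, List.length_drop] <;> omega

end FreeMonoid

namespace MonoidAlgebra

variable {k α : Type*} [Semiring k] {p q : MonoidAlgebra k (FreeMonoid α)} {m n : ℕ}

theorem coeff_mul_mul_of_length_eq (hp : ∀ s ∈ p.coeff.support, s.length ≤ m)
    (hq : ∀ t ∈ q.coeff.support, t.length ≤ n) {s t : FreeMonoid α}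
    (hs : s.length = m) (ht : t.length = n) :
    (p * q).coeff (s * t) = p.coeff s * q.coeff t := by
  classical
  rw [MonoidAlgebra.coeff_mul, Finsupp.sum, Finset.sum_eq_single s, Finsupp.sum,
    Finset.sum_eq_single t, if_pos rfl]
  · intro t' _ ht'
    exact if_neg fun h => ht' (mul_left_cancel h)
  · intro ht'
    simp [Finsupp.notMem_support_iff.mp ht']
  · intro s' hs' hss'
    refine Finset.sum_eq_zero fun t' ht' => if_neg fun h => hss' ?_
    exact (FreeMonoid.eq_and_eq_of_mul_eq_mul_of_length_le h (hs ▸ hp s' hs') (ht ▸ hq t' ht')).1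
  · intro hs'
    simp [Finsupp.notMem_support_iff.mp hs']

end MonoidAlgebra

namespace FreeStarAlg

variable {g d : ℕ} {p q : FreeStarAlg g}

theorem length_le_deg {w : FreeMonoid (Fin g ⊕ Fin g)} (hw : w ∈ p.coeff.support) :
    w.length ≤ deg p :=
  Finset.le_sup (f := fun w => w.toList.length) hw

theorem exists_length_eq_deg (hp : p ≠ 0) : ∃ w ∈ p.coeff.support, w.length = deg p := by
  obtain ⟨w, hw, h⟩ := Finset.exists_mem_eq_sup p.coeff.support
    (Finsupp.support_nonempty_iff.mpr (mt MonoidAlgebra.coeff_eq_zero.mp hp))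
    fun w => w.toList.length
  exact ⟨w, hw, h.symm⟩

theorem IsHom.deg_eq (h : IsHom d p) (hp : p ≠ 0) : deg p = d := by
  obtain ⟨w, hw, hlen⟩ := exists_length_eq_deg hp
  exact hlen.symm.trans (h w hw)

theorem IsHom.add (hp : IsHom d p) (hq : IsHom d q) : IsHom d (p + q) := by
  classical
  exact fun w hw => (Finset.mem_union.mp (Finsupp.support_add hw)).elim (hp w) (hq w)

theorem coeff_mul_mul_of_length_eq_deg {s t : FreeMonoid (Fin g ⊕ Fin g)}
    (hs : s.length = deg p) (ht : t.length = deg q) :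
    (p * q).coeff (s * t) = p.coeff s * q.coeff t :=
  MonoidAlgebra.coeff_mul_mul_of_length_eq (fun _ => length_le_deg) (fun _ => length_le_deg) hs ht

theorem deg_mul (hp : p ≠ 0) (hq : q ≠ 0) : deg (p * q) = deg p + deg q := by
  classical
  apply le_antisymm
  · refine Finset.sup_le fun w hw => ?_
    obtain ⟨s, hs, t, ht, rfl⟩ := Finset.mem_mul.mp (MonoidAlgebra.support_coeff_mul_subset p q hw)
    exact (FreeMonoid.length_mul s t).trans_le (add_le_add (length_le_deg hs) (length_le_deg ht))
  · obtain ⟨s, hs, hslen⟩ := exists_length_eq_deg hp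
    obtain ⟨t, ht, htlen⟩ := exists_length_eq_deg hq
    have hst : s * t ∈ (p * q).coeff.support := by
      rw [Finsupp.mem_support_iff, coeff_mul_mul_of_length_eq_deg hslen htlen]
      exact mul_ne_zero (Finsupp.mem_support_iff.mp hs) (Finsupp.mem_support_iff.mp ht)
    calc deg p + deg q = (s * t).length := by rw [FreeMonoid.length_mul, hslen, htlen]
      _ ≤ deg (p * q) := length_le_deg hst

theorem coeff_mul_mul_ne_zero {s t s' t' : FreeMonoid (Fin g ⊕ Fin g)}
    (hs : s.length = deg p) (ht : t.length = deg q) (hs' : s'.length = deg p)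
    (ht' : t'.length = deg q) (h : (p * q).coeff (s * t) ≠ 0) (h' : (p * q).coeff (s' * t') ≠ 0) :
    (p * q).coeff (s * t') ≠ 0 := by
  rw [coeff_mul_mul_of_length_eq_deg hs ht] at h
  rw [coeff_mul_mul_of_length_eq_deg hs' ht'] at h'
  rw [coeff_mul_mul_of_length_eq_deg hs ht']
  exact mul_ne_zero (left_ne_zero_of_mul h) (right_ne_zero_of_mul h')

theorem starWord_starWord (w : FreeMonoid (Fin g ⊕ Fin g)) : starWord (starWord w) = w := by
  simp [starWord, List.map_reverse, Function.comp_def]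

theorem coeff_starP (b : FreeStarAlg g) (w : FreeMonoid (Fin g ⊕ Fin g)) :
    (starP b).coeff w = b.coeff (starWord w) := by
  conv_lhs => rw [← starWord_starWord w]
  exact Finsupp.mapDomain_apply (Function.LeftInverse.injective starWord_starWord) b.coeff _

theorem mem_support_starP {b : FreeStarAlg g} {w : FreeMonoid (Fin g ⊕ Fin g)} :
    w ∈ (starP b).coeff.support ↔ starWord w ∈ b.coeff.support := by
  rw [Finsupp.mem_support_iff, Finsupp.mem_support_iff, coeff_starP]

theorem starP_ne_zero {b : FreeStarAlg g} (hb : b ≠ 0) : starP b ≠ 0 := by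
  obtain ⟨w, hw⟩ := Finsupp.support_nonempty_iff.mpr (mt MonoidAlgebra.coeff_eq_zero.mp hb)
  intro h
  have := mem_support_starP.mpr ((starWord_starWord w).symm ▸ hw)
  simp [h] at this

theorem IsHom.starP {b : FreeStarAlg g} (hb : IsHom d b) : IsHom d (starP b) := fun w hw => by
  simpa [starWord] using hb _ (mem_support_starP.mp hw)

def IsAntianalytic (p : FreeStarAlg g) : Prop :=
  ∀ w ∈ p.coeff.support, ∀ l ∈ FreeMonoid.toList w, l.isRight

theorem IsAnalytic.starP {b : FreeStarAlg g} (hb : IsAnalytic b) : IsAntianalytic (starP b) :=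
  fun w hw l hl => by
    simpa using hb _ (mem_support_starP.mp hw) l.swap
      (List.mem_reverse.mpr (List.mem_map_of_mem hl))

theorem IsAnalytic.disjoint_support (hp : IsAnalytic p) (hq : IsAntianalytic q) (hhom : IsHom d p)
    (hd : 0 < d) : Disjoint p.coeff.support q.coeff.support := by
  classical
  refine Finset.disjoint_left.mpr fun w hwp hwq => ?_
  obtain ⟨l, hl⟩ := List.exists_mem_of_length_pos ((hhom w hwp).symm ▸ hd)
  exact not_isLeft_and_isRight ⟨hp w hwp l hl, hq w hwq l hl⟩

theorem coeff_add_eq_zero_of_isLeft_of_isRight (hp : IsAnalytic p) (hq : IsAntianalytic q)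
    {w : FreeMonoid (Fin g ⊕ Fin g)} {x y : Fin g ⊕ Fin g} (hx : x.isLeft) (hy : y.isRight)
    (hxw : x ∈ w) (hyw : y ∈ w) : (p + q).coeff w = 0 := by
  classical
  by_contra h
  rcases Finset.mem_union.mp (Finsupp.support_add (Finsupp.mem_support_iff.mpr h)) with hw | hw
  · exact not_isLeft_and_isRight ⟨hp w hw y hyw, hy⟩
  · exact not_isLeft_and_isRight ⟨hx, hq w hw x hxw⟩

end FreeStarAlg

/-- If `a, b` are nonzero homogeneous analytic polynomials of the same
positive degree `d`, then `a + b*` is irreducible. -/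
theorem stmt13 {g d : ℕ} (a b : FreeStarAlg g)
    (ha : IsAnalytic a) (hb : IsAnalytic b)
    (hahom : IsHom d a) (hbhom : IsHom d b)
    (ha0 : a ≠ 0) (hb0 : b ≠ 0) (hd : 0 < d) :
    Irred (a + starP b) := by
  classical
  rintro ⟨q, r, hqr, hq, hr⟩
  have hsupp := Finsupp.support_add_eq (ha.disjoint_support hb.starP hahom hd)
  obtain ⟨u, hu, -⟩ := exists_length_eq_deg ha0
  obtain ⟨v, hv, -⟩ := exists_length_eq_deg (starP_ne_zero hb0)
  have huP : u ∈ (a + starP b).coeff.support := hsupp ▸ Finset.mem_union_left _ hu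
  have hvP : v ∈ (a + starP b).coeff.support := hsupp ▸ Finset.mem_union_right _ hv
  have hP0 : a + starP b ≠ 0 := fun h => by simp [h] at huP
  have hP : deg (a + starP b) = d := (hahom.add hbhom.starP).deg_eq hP0
  rw [hP] at hq hr
  have hdeg : deg q + deg r = d := by
    rw [← deg_mul (left_ne_zero_of_mul (hqr ▸ hP0)) (right_ne_zero_of_mul (hqr ▸ hP0)), ← hqr, hP]
  obtain ⟨u₁, u₂, rfl, hu₁, hu₂⟩ := FreeMonoid.exists_mul_eq_of_length_eq_add
    ((hahom u hu).trans hdeg.symm)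
  obtain ⟨v₁, v₂, rfl, hv₁, hv₂⟩ := FreeMonoid.exists_mul_eq_of_length_eq_add
    ((hbhom.starP v hv).trans hdeg.symm)
  obtain ⟨x, hx⟩ := List.exists_mem_of_length_pos (show 0 < u₁.length by omega)
  obtain ⟨y, hy⟩ := List.exists_mem_of_length_pos (show 0 < v₂.length by omega)
  rw [hqr] at huP hvP
  refine coeff_mul_mul_ne_zero hu₁ hu₂ hv₁ hv₂ (Finsupp.mem_support_iff.mp huP)
    (Finsupp.mem_support_iff.mp hvP) ?_
  have hxu : x ∈ u₁ * u₂ := FreeMonoid.mem_mul.mpr (.inl hx)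
  have hyv : y ∈ v₁ * v₂ := FreeMonoid.mem_mul.mpr (.inr hy)
  rw [← hqr]
  exact coeff_add_eq_zero_of_isLeft_of_isRight ha hb.starP (ha _ hu x hxu) (hb.starP _ hv y hyv)
    (FreeMonoid.mem_mul.mpr (.inl hx)) (FreeMonoid.mem_mul.mpr (.inr hy))
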